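/- arXiv:0910.1306 — 2 statements merged into one kernel-verified Lean document; each statement's English description precedes it below -/
import Mathlib

section
/- Let F, G : C → D be normal lax symmetric monoidal functors, α : F → G a monoidal natural transformation, and (M, M∨, η, ε) a dual pair in C with c^F_{M,M∨} and c^G_{M,M∨} invertible. Then for any endomorphism f : M → M, tr(F(f)) = tr(G(f)) as morphisms I_D → I_D, where F(f) is regarded as a morphism I_D ⊗ F(M) → F(M) ⊗ I_D via the unitors and its trace is taken with respect to the induced dual pair (F(M), F(M∨)), and similarly tr(G(f)) with respect to (G(M), G(M∨)). -/
open CategoryTheory Category MonoidalCategory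

universe v u v' u'

/-- The data of a candidate dual pair in a monoidal category: an object `M`, an object `Mv`,
a coevaluation `η : 𝟙_ C ⟶ M ⊗ Mv` and an evaluation `ε : Mv ⊗ M ⟶ 𝟙_ C`. -/
structure MonDualData (C : Type u) [Category.{v} C] [MonoidalCategory C] where
  M : C
  Mv : C
  η : 𝟙_ C ⟶ M ⊗ Mv
  ε : Mv ⊗ M ⟶ 𝟙_ C

/-- The two triangle identities, saying that `(M, Mv, η, ε)` is a dual pair. -/
def MonDualData.IsDualPair {C : Type u} [Category.{v} C] [MonoidalCategory C]
    (D : MonDualData C) : Prop :=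
  ((λ_ D.M).inv ≫ (D.η ▷ D.M) ≫ (α_ D.M D.Mv D.M).hom ≫ (D.M ◁ D.ε) ≫ (ρ_ D.M).hom
      = 𝟙 D.M) ∧
  ((ρ_ D.Mv).inv ≫ (D.Mv ◁ D.η) ≫ (α_ D.Mv D.M D.Mv).inv ≫ (D.ε ▷ D.Mv) ≫ (λ_ D.Mv).hom
      = 𝟙 D.Mv)

/-- The trace of `f : Q ⊗ M ⟶ M ⊗ P` with respect to a (candidate) dual pair for `M`,
in a symmetric monoidal category. -/
def mtrace {C : Type u} [Category.{v} C] [MonoidalCategory C] [SymmetricCategory C]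
    (D : MonDualData C) {Q P : C} (f : Q ⊗ D.M ⟶ D.M ⊗ P) : Q ⟶ P :=
  (ρ_ Q).inv ≫ (Q ◁ D.η) ≫ (α_ Q D.M D.Mv).inv ≫ (f ▷ D.Mv) ≫
    (β_ (D.M ⊗ P) D.Mv).hom ≫ (α_ D.Mv D.M P).inv ≫ (D.ε ▷ P) ≫ (λ_ P).hom

/-- A lax symmetric monoidal functor between symmetric monoidal categories: a functor `F`
together with structure morphisms `i : 𝟙_ D ⟶ F (𝟙_ C)` and
`c X Y : F X ⊗ F Y ⟶ F (X ⊗ Y)` (natural in `X` and `Y`), satisfying the associativity,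
unit, and symmetry coherence axioms.  `F` is called normal when `i` is invertible. -/
structure LaxSymMonFunctor (C : Type u) (D : Type u') [Category.{v} C] [Category.{v'} D]
    [MonoidalCategory C] [MonoidalCategory D] [SymmetricCategory C] [SymmetricCategory D]
    extends C ⥤ D where
  i : 𝟙_ D ⟶ obj (𝟙_ C)
  c : ∀ X Y : C, obj X ⊗ obj Y ⟶ obj (X ⊗ Y)
  c_natural : ∀ {X X' Y Y' : C} (f : X ⟶ X') (g : Y ⟶ Y'),
    (map f ⊗ₘ map g) ≫ c X' Y' = c X Y ≫ map (f ⊗ₘ g)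
  associativity : ∀ X Y Z : C,
    (c X Y ▷ obj Z) ≫ c (X ⊗ Y) Z ≫ map (α_ X Y Z).hom =
      (α_ (obj X) (obj Y) (obj Z)).hom ≫ (obj X ◁ c Y Z) ≫ c X (Y ⊗ Z)
  left_unitality : ∀ X : C,
    (λ_ (obj X)).hom = (i ▷ obj X) ≫ c (𝟙_ C) X ≫ map (λ_ X).hom
  right_unitality : ∀ X : C,
    (ρ_ (obj X)).hom = (obj X ◁ i) ≫ c X (𝟙_ C) ≫ map (ρ_ X).hom
  symmetry : ∀ X Y : C,
    (β_ (obj X) (obj Y)).hom ≫ c Y X = c X Y ≫ map (β_ X Y).hom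

/-- The induced duality data on `(F M, F M∨)` for a normal lax symmetric monoidal functor `F`
with `c_{M,M∨}` invertible: the coevaluation is `c_{M,M∨}⁻¹ ∘ F(η) ∘ i` and the evaluation is
`i⁻¹ ∘ F(ε) ∘ c_{M∨,M}`. -/
noncomputable abbrev LaxSymMonFunctor.inducedData {C : Type u} {D : Type u'} [Category.{v} C]
    [Category.{v'} D] [MonoidalCategory C] [MonoidalCategory D] [SymmetricCategory C]
    [SymmetricCategory D] (F : LaxSymMonFunctor C D) (Dp : MonDualData C)
    [IsIso F.i] [IsIso (F.c Dp.M Dp.Mv)] : MonDualData D where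
  M := F.obj Dp.M
  Mv := F.obj Dp.Mv
  η := F.i ≫ F.map Dp.η ≫ inv (F.c Dp.M Dp.Mv)
  ε := F.c Dp.Mv Dp.M ≫ F.map Dp.ε ≫ inv F.i

/-- A monoidal natural transformation between lax symmetric monoidal functors:
a natural transformation compatible with the structure morphisms `c` and `i`. -/
structure MonNatTrans {C : Type u} {D : Type u'} [Category.{v} C] [Category.{v'} D]
    [MonoidalCategory C] [MonoidalCategory D] [SymmetricCategory C] [SymmetricCategory D]
    (F G : LaxSymMonFunctor C D) where
  app : ∀ X : C, F.obj X ⟶ G.obj X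
  naturality : ∀ {X Y : C} (f : X ⟶ Y), F.map f ≫ app Y = app X ≫ G.map f
  unit : F.i ≫ app (𝟙_ C) = G.i
  tensor : ∀ X Y : C, F.c X Y ≫ app (X ⊗ Y) = (app X ⊗ₘ app Y) ≫ G.c X Y

/-- The mate of `α_{M∨}`: the composite
`G(M) ≅ I ⊗ G(M) ⟶ (F(M) ⊗ F(M∨)) ⊗ G(M) ⟶ (F(M) ⊗ G(M∨)) ⊗ G(M) ≅ F(M) ⊗ (G(M∨) ⊗ G(M))
⟶ F(M) ⊗ I ≅ F(M)`, using the coevaluation of the induced dual pair `(F M, F M∨)`,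
the component `α_{M∨}`, and the evaluation of the induced dual pair `(G M, G M∨)`. -/
noncomputable def MonNatTrans.dualMate {C : Type u} {D : Type u'} [Category.{v} C]
    [Category.{v'} D] [MonoidalCategory C] [MonoidalCategory D] [SymmetricCategory C]
    [SymmetricCategory D] {F G : LaxSymMonFunctor C D} (τ : MonNatTrans F G)
    (Dp : MonDualData C) [IsIso F.i] [IsIso G.i]
    [IsIso (F.c Dp.M Dp.Mv)] [IsIso (G.c Dp.M Dp.Mv)] :
    G.obj Dp.M ⟶ F.obj Dp.M :=
  (λ_ (G.obj Dp.M)).inv ≫ ((F.inducedData Dp).η ▷ G.obj Dp.M) ≫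
    ((F.obj Dp.M ◁ τ.app Dp.Mv) ▷ G.obj Dp.M) ≫
    (α_ (F.obj Dp.M) (G.obj Dp.Mv) (G.obj Dp.M)).hom ≫
    (F.obj Dp.M ◁ (G.inducedData Dp).ε) ≫ (ρ_ (F.obj Dp.M)).hom

/-!
After stripping the unitors, the trace of `F(f)` for the induced dual pair is
`i ∘ F(tr f) ∘ i⁻¹`: the structure maps `c` commute with `F(f) ⊗ 1` and with the braiding, so
they cancel against `c⁻¹`. Naturality of `α` at the unit object together with
`α_I ∘ i^F = i^G` shows that `i^F ∘ F(t) ∘ (i^F)⁻¹ = i^G ∘ G(t) ∘ (i^G)⁻¹` for every scalar `t`.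
-/

def MonDualData.endTrace {C : Type u} [Category.{v} C] [MonoidalCategory C]
    [SymmetricCategory C] (D : MonDualData C) (g : D.M ⟶ D.M) : 𝟙_ C ⟶ 𝟙_ C :=
  D.η ≫ (g ▷ D.Mv) ≫ (β_ D.M D.Mv).hom ≫ D.ε

theorem mtrace_unitors_eq_endTrace {C : Type u} [Category.{v} C] [MonoidalCategory C]
    [SymmetricCategory C] (D : MonDualData C) (g : D.M ⟶ D.M) :
    mtrace D ((λ_ D.M).hom ≫ g ≫ (ρ_ D.M).inv) = D.endTrace g := by
  unfold mtrace MonDualData.endTrace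
  simp only [comp_whiskerRight, assoc]
  rw [reassoc_of% (BraidedCategory.braiding_naturality_left (ρ_ D.M).inv D.Mv)]
  monoidal

namespace LaxSymMonFunctor

variable {C : Type u} {D : Type u'} [Category.{v} C] [Category.{v'} D] [MonoidalCategory C]
  [MonoidalCategory D] [SymmetricCategory C] [SymmetricCategory D]

theorem map_whiskerRight_comp_c (F : LaxSymMonFunctor C D) {X X' : C} (g : X ⟶ X') (Y : C) :
    (F.map g ▷ F.obj Y) ≫ F.c X' Y = F.c X Y ≫ F.map (g ▷ Y) := by
  simpa using F.c_natural g (𝟙 Y)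

theorem endTrace_inducedData (F : LaxSymMonFunctor C D) [IsIso F.i] (Dp : MonDualData C)
    [IsIso (F.c Dp.M Dp.Mv)] (g : Dp.M ⟶ Dp.M) :
    (F.inducedData Dp).endTrace (F.map g) = F.i ≫ F.map (Dp.endTrace g) ≫ inv F.i := by
  change (F.i ≫ F.map Dp.η ≫ inv (F.c Dp.M Dp.Mv)) ≫ (F.map g ▷ F.obj Dp.Mv) ≫
      (β_ (F.obj Dp.M) (F.obj Dp.Mv)).hom ≫ (F.c Dp.Mv Dp.M ≫ F.map Dp.ε ≫ inv F.i) = _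
  simp only [assoc]
  rw [reassoc_of% F.symmetry, reassoc_of% F.map_whiskerRight_comp_c, IsIso.inv_hom_id_assoc]
  simp only [MonDualData.endTrace, Functor.map_comp, assoc]

end LaxSymMonFunctor

theorem MonNatTrans.conj_map_unit_eq {C : Type u} {D : Type u'} [Category.{v} C]
    [Category.{v'} D] [MonoidalCategory C] [MonoidalCategory D] [SymmetricCategory C]
    [SymmetricCategory D] {F G : LaxSymMonFunctor C D} [IsIso F.i] [IsIso G.i]
    (τ : MonNatTrans F G) (t : 𝟙_ C ⟶ 𝟙_ C) :
    F.i ≫ F.map t ≫ inv F.i = G.i ≫ G.map t ≫ inv G.i := by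
  have hinv : τ.app (𝟙_ C) ≫ inv G.i = inv F.i := by
    rw [IsIso.comp_inv_eq, ← τ.unit, IsIso.inv_hom_id_assoc]
  calc F.i ≫ F.map t ≫ inv F.i
      = F.i ≫ (F.map t ≫ τ.app (𝟙_ C)) ≫ inv G.i := by rw [assoc, hinv]
    _ = (F.i ≫ τ.app (𝟙_ C)) ≫ G.map t ≫ inv G.i := by rw [τ.naturality t]; simp only [assoc]
    _ = G.i ≫ G.map t ≫ inv G.i := by rw [τ.unit]

theorem monNatTrans_trace_eq_general {C : Type u} {D : Type u'} [Category.{v} C]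
    [Category.{v'} D] [MonoidalCategory C] [MonoidalCategory D] [SymmetricCategory C]
    [SymmetricCategory D] (F G : LaxSymMonFunctor C D) [IsIso F.i] [IsIso G.i]
    (τ : MonNatTrans F G) (Dp : MonDualData C)
    [IsIso (F.c Dp.M Dp.Mv)] [IsIso (G.c Dp.M Dp.Mv)] (f : Dp.M ⟶ Dp.M) :
    mtrace (F.inducedData Dp) ((λ_ (F.obj Dp.M)).hom ≫ F.map f ≫ (ρ_ (F.obj Dp.M)).inv)
      = mtrace (G.inducedData Dp)
          ((λ_ (G.obj Dp.M)).hom ≫ G.map f ≫ (ρ_ (G.obj Dp.M)).inv) := by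
  rw [mtrace_unitors_eq_endTrace, mtrace_unitors_eq_endTrace, F.endTrace_inducedData,
    G.endTrace_inducedData]
  exact τ.conj_map_unit_eq (Dp.endTrace f)

/-- For a monoidal natural transformation `α : F ⟶ G` between normal lax symmetric monoidal
functors and a dual pair `(M, M∨, η, ε)` with `c^F_{M,M∨}` and `c^G_{M,M∨}` invertible,
for any endomorphism `f : M ⟶ M` one has `tr(F f) = tr(G f) : 𝟙_ D ⟶ 𝟙_ D`, where `F f`
is regarded as a morphism `𝟙_ D ⊗ F M ⟶ F M ⊗ 𝟙_ D` via the unitors and traced with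
respect to the induced dual pair `(F M, F M∨)`, and similarly for `G f`. -/
theorem monNatTrans_trace_eq {C : Type u} {D : Type u'} [Category.{v} C]
    [Category.{v'} D] [MonoidalCategory C] [MonoidalCategory D] [SymmetricCategory C]
    [SymmetricCategory D] (F G : LaxSymMonFunctor C D) [IsIso F.i] [IsIso G.i]
    (τ : MonNatTrans F G) (Dp : MonDualData C) (hDp : Dp.IsDualPair)
    [IsIso (F.c Dp.M Dp.Mv)] [IsIso (G.c Dp.M Dp.Mv)] (f : Dp.M ⟶ Dp.M) :
    mtrace (F.inducedData Dp) ((λ_ (F.obj Dp.M)).hom ≫ F.map f ≫ (ρ_ (F.obj Dp.M)).inv)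
      = mtrace (G.inducedData Dp)
          ((λ_ (G.obj Dp.M)).hom ≫ G.map f ≫ (ρ_ (G.obj Dp.M)).inv) :=
  monNatTrans_trace_eq_general F G τ Dp f
end

section
/- Sliding (cyclicity of the bicategorical trace): Let B be a bicategory with a shadow ⟦−⟧, let (M, M∨, η_M, ε_M) and (N, N∨, η_N, ε_N) be dual pairs with M, N : R → S, and let f : Q ⊙ M → N ⊙ P and g : K ⊙ N → M ⊙ L be 2-cells (Q, K : R → R and P, L : S → S). Then the square commutes: θ_{P⊙L→L⊙P} ∘ tr_N((f ⊙ id_L) ∘ (id_Q ⊙ g)) = tr_M((g ⊙ id_P) ∘ (id_K ⊙ f)) ∘ θ_{Q⊙K→K⊙Q}, where tr_N is the trace with respect to (N, N∨) of the composite 2-cell (Q ⊙ K) ⊙ N → N ⊙ (P ⊙ L), tr_M is the trace with respect to (M, M∨) of the composite (K ⊙ Q) ⊙ M → M ⊙ (L ⊙ P), and associativity isomorphisms are inserted as needed. -/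
open CategoryTheory Category

universe w v u w' v' u' v₁ u₁ v₂ u₂

/-- The data of a candidate dual pair in a bicategory (horizontal composition written in
diagrammatic order): 1-cells `M : R ⟶ S` and `Mv : S ⟶ R` together with a coevaluation
`η : 𝟙 R ⟶ M ≫ Mv` and an evaluation `ε : Mv ≫ M ⟶ 𝟙 S`. -/
structure BicatDualData {B : Type u} [Bicategory.{w, v} B] (R S : B) where
  M : R ⟶ S
  Mv : S ⟶ R
  η : 𝟙 R ⟶ M ≫ Mv
  ε : Mv ≫ M ⟶ 𝟙 S

open Bicategory

/-- The two triangle identities, saying that `(M, Mv, η, ε)` is a dual pair, i.e. that `M`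
is right dualizable with right dual `Mv`. -/
def BicatDualData.IsDualPair {B : Type u} [Bicategory.{w, v} B] {R S : B}
    (D : BicatDualData R S) : Prop :=
  ((λ_ D.M).inv ≫ (D.η ▷ D.M) ≫ (α_ D.M D.Mv D.M).hom ≫ (D.M ◁ D.ε) ≫ (ρ_ D.M).hom
      = 𝟙 D.M) ∧
  ((ρ_ D.Mv).inv ≫ (D.Mv ◁ D.η) ≫ (α_ D.Mv D.M D.Mv).inv ≫ (D.ε ▷ D.Mv) ≫ (λ_ D.Mv).hom
      = 𝟙 D.Mv)

/-- A shadow on a bicategory `B` with values in a category `V`: functors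
`⟦-⟧ : B(R,R) ⥤ V` for every 0-cell `R`, together with natural isomorphisms
`θ_{M,N} : ⟦M ≫ N⟧ ≅ ⟦N ≫ M⟧` satisfying the hexagon and unit axioms. -/
structure Shadow (B : Type u) [Bicategory.{w, v} B] (V : Type u₁) [Category.{v₁} V] where
  sh : ∀ R : B, (R ⟶ R) ⥤ V
  θ : ∀ {R S : B} (M : R ⟶ S) (N : S ⟶ R), (sh R).obj (M ≫ N) ≅ (sh S).obj (N ≫ M)
  θ_natural : ∀ {R S : B} {M M' : R ⟶ S} {N N' : S ⟶ R} (f : M ⟶ M') (g : N ⟶ N'),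
    (sh R).map (f ▷ N ≫ M' ◁ g) ≫ (θ M' N').hom
      = (θ M N).hom ≫ (sh S).map (g ▷ M ≫ N' ◁ f)
  hexagon : ∀ {R S T : B} (M : R ⟶ S) (N : S ⟶ T) (P : T ⟶ R),
    (θ (M ≫ N) P).hom ≫ (sh T).map (α_ P M N).inv
      = (sh R).map (α_ M N P).hom ≫ (θ M (N ≫ P)).hom ≫ (sh S).map (α_ N P M).hom ≫
          (θ N (P ≫ M)).hom
  unit_right : ∀ {R : B} (M : R ⟶ R),
    (θ M (𝟙 R)).hom ≫ (sh R).map (λ_ M).hom = (sh R).map (ρ_ M).hom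
  unit_left : ∀ {R : B} (M : R ⟶ R),
    (θ (𝟙 R) M).hom ≫ (sh R).map (ρ_ M).hom = (sh R).map (λ_ M).hom

/-- The bicategorical trace of a 2-cell `f : Q ≫ M ⟶ M ≫ P` (`Q : R ⟶ R`, `P : S ⟶ S`)
with respect to a (candidate) dual pair `(M, Mv, η, ε)`, relative to a shadow: the composite
`⟦Q⟧ ≅ ⟦Q ⊙ U_R⟧ → ⟦Q ⊙ (M ⊙ M∨)⟧ ≅ ⟦(Q ⊙ M) ⊙ M∨⟧ → ⟦(M ⊙ P) ⊙ M∨⟧ ≅θ ⟦M∨ ⊙ (M ⊙ P)⟧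
≅ ⟦(M∨ ⊙ M) ⊙ P⟧ → ⟦U_S ⊙ P⟧ ≅ ⟦P⟧`. -/
def btrace {B : Type u} [Bicategory.{w, v} B] {V : Type u₁} [Category.{v₁} V]
    (sh : Shadow B V) {R S : B} (D : BicatDualData R S) {Q : R ⟶ R} {P : S ⟶ S}
    (f : Q ≫ D.M ⟶ D.M ≫ P) : (sh.sh R).obj Q ⟶ (sh.sh S).obj P :=
  (sh.sh R).map ((ρ_ Q).inv ≫ (Q ◁ D.η) ≫ (α_ Q D.M D.Mv).inv ≫ (f ▷ D.Mv)) ≫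
    (sh.θ (D.M ≫ P) D.Mv).hom ≫
    (sh.sh S).map ((α_ D.Mv D.M P).inv ≫ (D.ε ▷ P) ≫ (λ_ P).hom)

/-!
Let `g♮ : M∨ ⊙ K ⟶ L ⊙ N∨` be the mate of `g`, built from `ε_M` and `η_N`. Naturality of `θ` and
the hexagon axiom (with the involutivity of `θ`) merge the two `θ`'s on each side into one,
leaving, for suitable 2-cells `A` and `C`, `⟦A ≫ (N ⊙ P) ◁ g♮⟧ ≫ θ_{N ⊙ P, L ⊙ N∨} ≫ ⟦C⟧` on the
left, where the triangle identity of `M` absorbs `g♮` into `A`, and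
`⟦A⟧ ≫ θ_{N ⊙ P, M∨ ⊙ K} ≫ ⟦g♮ ▷ (N ⊙ P) ≫ C⟧` on the right, where the triangle identity of `N`
absorbs it into `C`. Naturality of `θ` in its second variable identifies the two.
-/

namespace BicatDualData

variable {B : Type u} [Bicategory.{w, v} B]

def coev {R S : B} (D : BicatDualData R S) {T : B} (X : T ⟶ R) : X ⟶ (X ≫ D.M) ≫ D.Mv :=
  (ρ_ X).inv ≫ X ◁ D.η ≫ (α_ X D.M D.Mv).inv

def ev {R S : B} (D : BicatDualData R S) {T : B} (Y : S ⟶ T) : D.Mv ≫ D.M ≫ Y ⟶ Y :=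
  (α_ D.Mv D.M Y).inv ≫ D.ε ▷ Y ≫ (λ_ Y).hom

lemma IsDualPair.coev_whiskerRight_ev {R S : B} {D : BicatDualData R S} (hD : D.IsDualPair)
    {T T' : B} (X : T ⟶ R) (Y : S ⟶ T') :
    D.coev X ▷ (D.M ≫ Y) ≫ (α_ (X ≫ D.M) D.Mv (D.M ≫ Y)).hom ≫ (X ≫ D.M) ◁ D.ev Y
      = (α_ X D.M Y).inv := by
  rw [← cancel_mono (α_ X D.M Y).hom, Iso.inv_hom_id]
  calc _ = X ◁ ((λ_ D.M).inv ≫ D.η ▷ D.M ≫ (α_ D.M D.Mv D.M).hom ≫ D.M ◁ D.ε ≫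
          (ρ_ D.M).hom) ▷ Y := by
        simp only [coev, ev]; bicategory
    _ = _ := by rw [hD.1]; simp

lemma comp_whiskerLeft_coev {R S : B} (D : BicatDualData R S) {T T' : B} {Y : T ⟶ R}
    {Z : T ⟶ T'} {X : T' ⟶ R} (c : Y ⟶ Z ≫ X) :
    c ≫ Z ◁ D.coev X
      = D.coev Y ≫ (c ▷ D.M ≫ (α_ Z X D.M).hom) ▷ D.Mv ≫ (α_ Z (X ≫ D.M) D.Mv).hom := by
  calc _ = c ≫ (ρ_ (Z ≫ X)).inv ≫ (Z ≫ X) ◁ D.η ≫ (α_ (Z ≫ X) D.M D.Mv).inv ≫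
          (α_ Z X D.M).hom ▷ D.Mv ≫ (α_ Z (X ≫ D.M) D.Mv).hom := by
        simp only [coev]; bicategory
    _ = _ := by
        rw [rightUnitor_inv_naturality_assoc, ← whisker_exchange_assoc, coev]
        bicategory

variable {R S R' S' : B} (DM : BicatDualData R S) (DN : BicatDualData R' S')

def mate {K : R ⟶ R'} {L : S ⟶ S'} (g : K ≫ DN.M ⟶ DM.M ≫ L) : DM.Mv ≫ K ⟶ L ≫ DN.Mv :=
  DN.coev (DM.Mv ≫ K) ≫ ((α_ DM.Mv K DN.M).hom ≫ DM.Mv ◁ g ≫ DM.ev L) ▷ DN.Mv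

variable {DM DN}

lemma mate_whiskerRight_ev (hN : DN.IsDualPair) {K : R ⟶ R'} {L : S ⟶ S'}
    (g : K ≫ DN.M ⟶ DM.M ≫ L) {T : B} (P : S' ⟶ T) :
    DM.mate DN g ▷ (DN.M ≫ P) ≫ (α_ L DN.Mv (DN.M ≫ P)).hom ≫ L ◁ DN.ev P
      = (α_ DM.Mv K (DN.M ≫ P)).hom ≫
          DM.Mv ◁ ((α_ K DN.M P).inv ≫ g ▷ P ≫ (α_ DM.M L P).hom) ≫ DM.ev (L ≫ P) := by
  set ψ := (α_ DM.Mv K DN.M).hom ≫ DM.Mv ◁ g ≫ DM.ev L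
  calc _ = DN.coev (DM.Mv ≫ K) ▷ (DN.M ≫ P) ≫ (α_ _ DN.Mv (DN.M ≫ P)).hom ≫
          ψ ▷ (DN.Mv ≫ DN.M ≫ P) ≫ L ◁ DN.ev P := by
        rw [mate]; bicategory
    _ = DN.coev (DM.Mv ≫ K) ▷ (DN.M ≫ P) ≫ (α_ _ DN.Mv (DN.M ≫ P)).hom ≫
          ((DM.Mv ≫ K) ≫ DN.M) ◁ DN.ev P ≫ ψ ▷ P := by
        rw [whisker_exchange]
    _ = (α_ (DM.Mv ≫ K) DN.M P).inv ≫ ψ ▷ P := by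
        rw [reassoc_of% hN.coev_whiskerRight_ev]
    _ = _ := by
        simp only [ψ, ev]; bicategory

lemma coev_whiskerRight_mate (hM : DM.IsDualPair) {K : R ⟶ R'} {L : S ⟶ S'}
    (g : K ≫ DN.M ⟶ DM.M ≫ L) {T : B} {Q : T ⟶ R} {X : T ⟶ S} (f : Q ≫ DM.M ⟶ X) :
    (DM.coev Q ≫ f ▷ DM.Mv) ▷ K ≫ (α_ X DM.Mv K).hom ≫ X ◁ DM.mate DN g
      = DN.coev (Q ≫ K) ≫ ((α_ Q K DN.M).hom ≫ Q ◁ g ≫ (α_ Q DM.M L).inv ≫ f ▷ L) ▷ DN.Mv ≫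
          (α_ X L DN.Mv).hom := by
  set c := DM.coev Q ▷ K ≫ (α_ (Q ≫ DM.M) DM.Mv K).hom with hc
  set ψ := (α_ DM.Mv K DN.M).hom ≫ DM.Mv ◁ g ≫ DM.ev L with hψ
  clear_value c ψ
  have hcψ : c ▷ DN.M ≫ (α_ (Q ≫ DM.M) (DM.Mv ≫ K) DN.M).hom ≫ (Q ≫ DM.M) ◁ ψ
      = (α_ Q K DN.M).hom ≫ Q ◁ g ≫ (α_ Q DM.M L).inv := by
    calc _ = (α_ Q K DN.M).hom ≫ DM.coev Q ▷ (K ≫ DN.M) ≫ ((Q ≫ DM.M) ≫ DM.Mv) ◁ g ≫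
            (α_ (Q ≫ DM.M) DM.Mv (DM.M ≫ L)).hom ≫ (Q ≫ DM.M) ◁ DM.ev L := by
          rw [hc, hψ]; bicategory
      _ = _ := by
          rw [← whisker_exchange_assoc, hM.coev_whiskerRight_ev]
  calc _ = c ≫ (Q ≫ DM.M) ◁ DM.mate DN g ≫ f ▷ (L ≫ DN.Mv) := by
        rw [whisker_exchange, hc]; bicategory
    _ = DN.coev (Q ≫ K) ≫ (c ▷ DN.M ≫ (α_ (Q ≫ DM.M) (DM.Mv ≫ K) DN.M).hom) ▷ DN.Mv ≫
          (α_ (Q ≫ DM.M) ((DM.Mv ≫ K) ≫ DN.M) DN.Mv).hom ≫ (Q ≫ DM.M) ◁ ψ ▷ DN.Mv ≫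
          f ▷ (L ≫ DN.Mv) := by
        rw [mate, ← hψ, whiskerLeft_comp, assoc, reassoc_of% DN.comp_whiskerLeft_coev c]
    _ = DN.coev (Q ≫ K) ≫ (c ▷ DN.M ≫ (α_ (Q ≫ DM.M) (DM.Mv ≫ K) DN.M).hom ≫
          (Q ≫ DM.M) ◁ ψ) ▷ DN.Mv ≫ (α_ (Q ≫ DM.M) L DN.Mv).hom ≫ f ▷ (L ≫ DN.Mv) := by
        bicategory
    _ = _ := by
        rw [hcψ]; bicategory

end BicatDualData

namespace Shadow

variable {B : Type u} [Bicategory.{w, v} B] {V : Type u₁} [Category.{v₁} V] (sh : Shadow B V)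

lemma θ_natural_left {R S : B} {M M' : R ⟶ S} (N : S ⟶ R) (f : M ⟶ M') :
    (sh.sh R).map (f ▷ N) ≫ (sh.θ M' N).hom = (sh.θ M N).hom ≫ (sh.sh S).map (N ◁ f) := by
  simpa using sh.θ_natural f (𝟙 N)

lemma θ_natural_right {R S : B} (M : R ⟶ S) {N N' : S ⟶ R} (g : N ⟶ N') :
    (sh.sh R).map (M ◁ g) ≫ (sh.θ M N').hom = (sh.θ M N).hom ≫ (sh.sh S).map (g ▷ M) := by
  simpa using sh.θ_natural (𝟙 M) g

lemma θ_hom_eq_of_iso_right {R S : B} (M : R ⟶ S) {N N' : S ⟶ R} (e : N ≅ N') :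
    (sh.θ M N').hom = (sh.sh R).map (M ◁ e.inv) ≫ (sh.θ M N).hom ≫ (sh.sh S).map (e.hom ▷ M) := by
  rw [reassoc_of% sh.θ_natural_right M e.inv, ← (sh.sh S).map_comp, inv_hom_whiskerRight,
    (sh.sh S).map_id, comp_id]

/-- The hexagon axiom with `P = U_R`, where the unit axiom turns `θ_{M ⊙ N, U_R}` into unitors. -/
lemma θ_hom_θ_hom {R S : B} (M : R ⟶ S) (N : S ⟶ R) :
    (sh.θ M N).hom ≫ (sh.θ N M).hom = 𝟙 _ := by
  have hex := sh.hexagon M N (𝟙 R)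
  have hunit : (sh.θ (M ≫ N) (𝟙 R)).hom =
      (sh.sh R).map ((ρ_ (M ≫ N)).hom ≫ (λ_ (M ≫ N)).inv) := by
    rw [(sh.sh R).map_comp, ← sh.unit_right, assoc, ← (sh.sh R).map_comp, Iso.hom_inv_id,
      (sh.sh R).map_id, comp_id]
  rw [sh.θ_hom_eq_of_iso_right M (ρ_ N).symm, sh.θ_hom_eq_of_iso_right N (λ_ M).symm,
    hunit] at hex
  simp only [Iso.symm_hom, Iso.symm_inv, assoc, ← Functor.map_comp_assoc,
    ← Functor.map_comp] at hex
  rw [show (ρ_ N).inv ▷ M ≫ (α_ N (𝟙 R) M).hom ≫ N ◁ (λ_ M).hom = 𝟙 _ by bicategory,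
    show (α_ M N (𝟙 R)).hom ≫ M ◁ (ρ_ N).hom = (ρ_ (M ≫ N)).hom by bicategory,
    show (ρ_ (M ≫ N)).hom ≫ (λ_ (M ≫ N)).inv ≫ (α_ (𝟙 R) M N).inv
      = (ρ_ (M ≫ N)).hom ≫ (λ_ M).inv ▷ N by bicategory,
    (sh.sh S).map_id, id_comp, (sh.sh R).map_comp, cancel_epi] at hex
  rw [← cancel_mono ((sh.sh R).map ((λ_ M).inv ▷ N)), assoc, ← hex, id_comp]

lemma hexagon' {R S T : B} (X : R ⟶ S) (Y : S ⟶ T) (Z : T ⟶ R) :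
    (sh.θ (X ≫ Y) Z).hom ≫ (sh.sh T).map (α_ Z X Y).inv ≫ (sh.θ (Z ≫ X) Y).hom
      = (sh.sh R).map (α_ X Y Z).hom ≫ (sh.θ X (Y ≫ Z)).hom ≫ (sh.sh S).map (α_ Y Z X).hom := by
  rw [reassoc_of% sh.hexagon X Y Z, sh.θ_hom_θ_hom, comp_id]

lemma btrace_eq_coev_ev {R S : B} (D : BicatDualData R S) {Q : R ⟶ R} {P : S ⟶ S}
    (f : Q ≫ D.M ⟶ D.M ≫ P) :
    btrace sh D f = (sh.sh R).map (D.coev Q ≫ f ▷ D.Mv) ≫ (sh.θ (D.M ≫ P) D.Mv).hom ≫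
      (sh.sh S).map (D.ev P) := by
  simp only [btrace, BicatDualData.coev, BicatDualData.ev, assoc]

lemma btrace_comp_θ {R S T : B} (D : BicatDualData R S) {Q : R ⟶ R} {P : S ⟶ T} {L : T ⟶ S}
    (h : Q ≫ D.M ⟶ (D.M ≫ P) ≫ L) :
    btrace sh D (h ≫ (α_ D.M P L).hom) ≫ (sh.θ P L).hom
      = (sh.sh R).map (D.coev Q ≫ h ▷ D.Mv ≫ (α_ (D.M ≫ P) L D.Mv).hom) ≫
          (sh.θ (D.M ≫ P) (L ≫ D.Mv)).hom ≫
          (sh.sh T).map ((α_ L D.Mv (D.M ≫ P)).hom ≫ L ◁ D.ev P) := by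
  have hev : D.Mv ◁ (α_ D.M P L).hom ≫ D.ev (P ≫ L)
      = (α_ D.Mv (D.M ≫ P) L).inv ≫ D.ev P ▷ L := by
    simp only [BicatDualData.ev]; bicategory
  rw [btrace_eq_coev_ev, comp_whiskerRight]
  simp only [Functor.map_comp, assoc]
  rw [reassoc_of% sh.θ_natural_left D.Mv (α_ D.M P L).hom, ← (sh.sh S).map_comp_assoc, hev,
    (sh.sh S).map_comp_assoc, sh.θ_natural_left L (D.ev P), reassoc_of% sh.hexagon']

lemma θ_comp_btrace {R S T : B} (D : BicatDualData R S) {Q : T ⟶ R} {K : R ⟶ T} {X : T ⟶ S}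
    (f : Q ≫ D.M ⟶ X) {P : S ⟶ S} (k : K ≫ X ⟶ D.M ≫ P) :
    (sh.θ Q K).hom ≫ btrace sh D ((α_ K Q D.M).hom ≫ K ◁ f ≫ k)
      = (sh.sh T).map ((D.coev Q ≫ f ▷ D.Mv) ▷ K ≫ (α_ X D.Mv K).hom) ≫
          (sh.θ X (D.Mv ≫ K)).hom ≫ (sh.sh S).map ((α_ D.Mv K X).hom ≫ D.Mv ◁ k ≫ D.ev P) := by
  have hcoev : D.coev (K ≫ Q) ≫ ((α_ K Q D.M).hom ≫ K ◁ f ≫ k) ▷ D.Mv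
      = K ◁ (D.coev Q ≫ f ▷ D.Mv) ≫ (α_ K X D.Mv).inv ≫ k ▷ D.Mv := by
    simp only [BicatDualData.coev]; bicategory
  rw [btrace_eq_coev_ev, hcoev]
  simp only [Functor.map_comp, assoc]
  rw [← reassoc_of% sh.θ_natural_left K (D.coev Q ≫ f ▷ D.Mv),
    reassoc_of% sh.θ_natural_left D.Mv k, reassoc_of% sh.hexagon']

end Shadow

/-- Sliding (cyclicity of the bicategorical trace): for dual pairs `(M, M∨)`, `(N, N∨)` with
`M, N : R ⟶ S` and 2-cells `f : Q ⊙ M ⟶ N ⊙ P`, `g : K ⊙ N ⟶ M ⊙ L`, the square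
`θ ∘ tr_N((f ⊙ id_L)(id_Q ⊙ g)) = tr_M((g ⊙ id_P)(id_K ⊙ f)) ∘ θ` commutes. -/
theorem btrace_sliding {B : Type u} [Bicategory.{w, v} B] {V : Type u₁}
    [Category.{v₁} V] (sh : Shadow B V) {R S : B}
    (DM DN : BicatDualData R S) (hM : DM.IsDualPair) (hN : DN.IsDualPair)
    {Q K : R ⟶ R} {P L : S ⟶ S}
    (f : Q ≫ DM.M ⟶ DN.M ≫ P) (g : K ≫ DN.M ⟶ DM.M ≫ L) :
    btrace sh DN ((α_ Q K DN.M).hom ≫ (Q ◁ g) ≫ (α_ Q DM.M L).inv ≫ (f ▷ L) ≫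
          (α_ DN.M P L).hom) ≫ (sh.θ P L).hom
      = (sh.θ Q K).hom ≫
          btrace sh DM ((α_ K Q DM.M).hom ≫ (K ◁ f) ≫ (α_ K DN.M P).inv ≫ (g ▷ P) ≫
            (α_ DM.M L P).hom) := by
  have hl := sh.btrace_comp_θ DN ((α_ Q K DN.M).hom ≫ Q ◁ g ≫ (α_ Q DM.M L).inv ≫ f ▷ L)
  have hr := sh.θ_comp_btrace DM f ((α_ K DN.M P).inv ≫ g ▷ P ≫ (α_ DM.M L P).hom)
  simp only [assoc] at hl hr
  rw [hl, hr, ← BicatDualData.coev_whiskerRight_mate hM g f,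
    ← BicatDualData.mate_whiskerRight_ev hN g P]
  simp only [Functor.map_comp, assoc]
  rw [reassoc_of% sh.θ_natural_right]
end
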